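/- (sl₃ case.) Fix μ_1, μ_2 ∈ ℝ and a nonzero real z. Define operators on smooth functions of three real variables (x_{11}, x_{12}, x_{22}) by: (T_1(τ)ψ)(x_{11},x_{12},x_{22}) = (1+x_{11}τ)^{μ_1} ψ(x_{11}/(1+x_{11}τ), x_{12}, x_{12}τ + x_{22}); (T_2(τ)ψ)(x_{11},x_{12},x_{22}) = (1+x_{22}τ)^{μ_2} ψ(−(x_{12} − x_{11}x_{22})τ + x_{11}, x_{12}/(1+x_{22}τ), x_{22}/(1+x_{22}τ)); (T_0(τ)ψ)(x_{11},x_{12},x_{22}) = ψ(x_{11}, x_{12} + τ/z, x_{22}). Then for every l ≥ 1, every word m = (m_1,…,m_l) ∈ {0,1,2}^l, on the open domain where all prefactors arising in the composition and the quantities P^1, P^2 below are positive: T_{m_l}(t_l) ∘ ⋯ ∘ T_{m_1}(t_1) applied to the constant function 1 equals (P^1)^{μ_1}·(P^2)^{μ_2}, where P^j = Σ_{l′=0}^{l} A^j_{l′} f^j_{l′}(t) with f^j_{l′}(t) = Σ_{1 ≤ p_1 < ⋯ < p_{l′} ≤ l, m_{p_s} ≡ j·s (mod 3)} t_{p_1}⋯t_{p_{l′}}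 (f^j_0 = 1), and A^1_{3q} = (−z)^{−q}, A^1_{3q+1} = (−z)^{−q}x_{11}, A^1_{3q+2} = (−z)^{−q}(x_{11}x_{22} − x_{12}), A^2_{3q} = z^{−q}, A^2_{3q+1} = z^{−q}x_{22}, A^2_{3q+2} = z^{−q}x_{12}. -/

import Mathlib

/-! The outermost operator is `T_{m_l}(t_l)`, so we induct on `l`, peeling off the last letter
`(c, s)`: `T_c(s)` moves the point `x` to `x' = stepPoint z c s x` and multiplies by
`π_1^{μ_1} π_2^{μ_2}`, where `π_j = 1 + x_{jj} s` if `c = j` and `π_j = 1` otherwise. It then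
suffices that `P^j` of the whole word at `x` is `π_j` times `P^j` of the shortened word at `x'`.
This comes from two recursions combined by an index shift: the labels of the chain `Γ^j` satisfy
`π_j A^j_n(x') = A^j_n(x) + [c ≡ j(n+1)] s A^j_{n+1}(x)` (checked for each residue of `n` mod 3),
and, since a strictly increasing tuple either avoids the last position or ends there,
`f^j_{n+1} = f'^j_{n+1} + [c ≡ j(n+1)] s f'^j_n` with `f'` taken for the shortened word.
-/

open scoped Classical

/-- Composition `T_{c_1}(s_1) ∘ T_{c_2}(s_2) ∘ ⋯` (head of the list is the outermost
operator) applied to the constant function `1`, for the sl₃ operators on functions of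
`(x₁₁, x₁₂, x₂₂)`:
`(T_1(τ)ψ)(x₁₁,x₁₂,x₂₂) = (1+x₁₁τ)^{μ₁} ψ(x₁₁/(1+x₁₁τ), x₁₂, x₁₂τ+x₂₂)`,
`(T_2(τ)ψ)(x₁₁,x₁₂,x₂₂) = (1+x₂₂τ)^{μ₂} ψ(−(x₁₂−x₁₁x₂₂)τ+x₁₁, x₁₂/(1+x₂₂τ), x₂₂/(1+x₂₂τ))`,
`(T_0(τ)ψ)(x₁₁,x₁₂,x₂₂) = ψ(x₁₁, x₁₂+τ/z, x₂₂)`. -/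
noncomputable def comp3 (μ1 μ2 z : ℝ) : List (ℕ × ℝ) → ℝ × ℝ × ℝ → ℝ
  | [], _ => 1
  | (c, s) :: rest, (a, b, d) =>
      if c = 1 then
        (1 + a * s) ^ μ1 * comp3 μ1 μ2 z rest (a / (1 + a * s), b, b * s + d)
      else if c = 2 then
        (1 + d * s) ^ μ2 *
          comp3 μ1 μ2 z rest (-(b - a * d) * s + a, b / (1 + d * s), d / (1 + d * s))
      else comp3 μ1 μ2 z rest (a, b + s / z, d)

/-- Positivity of every prefactor arising in the composition. -/
def good3 (z : ℝ) : List (ℕ × ℝ) → ℝ × ℝ × ℝ → Prop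
  | [], _ => True
  | (c, s) :: rest, (a, b, d) =>
      if c = 1 then 0 < 1 + a * s ∧ good3 z rest (a / (1 + a * s), b, b * s + d)
      else if c = 2 then 0 < 1 + d * s ∧
        good3 z rest (-(b - a * d) * s + a, b / (1 + d * s), d / (1 + d * s))
      else good3 z rest (a, b + s / z, d)

/-- `f^j_{l′}(t) = Σ t_{p_1}⋯t_{p_{l′}}`, summed over `1 ≤ p_1 < ⋯ < p_{l′} ≤ l` with
`m_{p_s} ≡ j·s (mod 3)` (1-based `s`); `f^j_0 = 1`. -/
noncomputable def fcoef (l : ℕ) (m : Fin l → ℕ) (j l' : ℕ) (t : Fin l → ℝ) : ℝ :=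
  ∑ p ∈ Finset.univ.filter (fun p : Fin l' → Fin l =>
      StrictMono p ∧ ∀ a, m (p a) % 3 = (j * ((a : ℕ) + 1)) % 3),
    ∏ a, t (p a)

/-- `A^1_{3q} = (−z)^{−q}`, `A^1_{3q+1} = (−z)^{−q}x₁₁`, `A^1_{3q+2} = (−z)^{−q}(x₁₁x₂₂−x₁₂)`. -/
noncomputable def Acoef1 (x11 x12 x22 z : ℝ) (l' : ℕ) : ℝ :=
  ((-z) ^ (l' / 3))⁻¹ *
    (if l' % 3 = 0 then 1 else if l' % 3 = 1 then x11 else x11 * x22 - x12)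

/-- `A^2_{3q} = z^{−q}`, `A^2_{3q+1} = z^{−q}x₂₂`, `A^2_{3q+2} = z^{−q}x₁₂`. -/
noncomputable def Acoef2 (x11 x12 x22 z : ℝ) (l' : ℕ) : ℝ :=
  (z ^ (l' / 3))⁻¹ * (if l' % 3 = 0 then 1 else if l' % 3 = 1 then x22 else x12)

/-- `P^j = Σ_{l′=0}^{l} A^j_{l′} f^j_{l′}(t)` for `j = 1, 2`. -/
noncomputable def Psl3 (l : ℕ) (m : Fin l → ℕ) (t : Fin l → ℝ)
    (x11 x12 x22 z : ℝ) (j : ℕ) : ℝ :=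
  ∑ l' ∈ Finset.range (l + 1),
    (if j = 1 then Acoef1 x11 x12 x22 z l' else Acoef2 x11 x12 x22 z l') *
      fcoef l m j l' t

section IncreasingSum

variable {R : Type*} [CommSemiring R]

section

variable {n : ℕ} (P : ℕ → Fin n → Prop) [∀ a x, Decidable (P a x)]

def increasingTuples (k : ℕ) : Finset (Fin k → Fin n) :=
  Finset.univ.filter fun p => StrictMono p ∧ ∀ a : Fin k, P a (p a)

noncomputable def increasingSum (t : Fin n → R) (k : ℕ) : R :=
  ∑ p ∈ increasingTuples P k, ∏ a, t (p a)

variable {P}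

lemma mem_increasingTuples {k : ℕ} {p : Fin k → Fin n} :
    p ∈ increasingTuples P k ↔ StrictMono p ∧ ∀ a : Fin k, P a (p a) := by
  simp [increasingTuples]

variable (P) (t : Fin n → R)

lemma increasingSum_zero : increasingSum P t 0 = 1 := by
  simp [increasingSum, increasingTuples, Subsingleton.strictMono]

lemma increasingSum_eq_zero_of_lt {k : ℕ} (h : n < k) : increasingSum P t k = 0 := by
  refine Finset.sum_eq_zero fun p hp => ?_
  have := Fintype.card_le_of_injective p (mem_increasingTuples.1 hp).1.injective
  simp only [Fintype.card_fin] at this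
  omega

end

variable {n k : ℕ} (P : ℕ → Fin (n + 1) → Prop) [∀ a x, Decidable (P a x)] (t : Fin (n + 1) → R)

lemma sum_increasingTuples_last_ne :
    ∑ p ∈ (increasingTuples P (k + 1)).filter (fun p => p (Fin.last k) ≠ Fin.last n),
      ∏ a, t (p a) =
    increasingSum (fun a x => P a x.castSucc) (t ∘ Fin.castSucc) (k + 1) := by
  have ne_last {p : Fin (k + 1) → Fin (n + 1)} (hp : StrictMono p)
      (hlast : p (Fin.last k) ≠ Fin.last n) (a : Fin (k + 1)) : p a ≠ Fin.last n :=
    fun h => hlast (le_antisymm (Fin.le_last _) (h ▸ hp.monotone (Fin.le_last a)))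
  refine Finset.sum_bij' (fun p hp a => (p a).castPred ?_) (fun q _ => Fin.castSucc ∘ q)
    ?_ ?_ ?_ ?_ ?_
  · simp only [Finset.mem_filter, mem_increasingTuples] at hp
    exact ne_last hp.1.1 hp.2 a
  · intro p hp
    simp only [Finset.mem_filter, mem_increasingTuples] at hp ⊢
    exact ⟨fun a b hab => by simpa [Fin.castPred_lt_castPred_iff] using hp.1.1 hab,
      fun a => by simpa using hp.1.2 a⟩
  · intro q hq
    simp only [Finset.mem_filter, mem_increasingTuples] at hq ⊢
    exact ⟨⟨Fin.strictMono_castSucc.comp hq.1, hq.2⟩, Fin.castSucc_ne_last _⟩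
  · intro p hp
    funext a
    simp
  · intro q hq
    funext a
    simp
  · intro p hp
    simp

lemma sum_increasingTuples_last_eq :
    ∑ p ∈ (increasingTuples P (k + 1)).filter (fun p => p (Fin.last k) = Fin.last n),
      ∏ a, t (p a) =
    (if P k (Fin.last n) then t (Fin.last n) else 0) *
      increasingSum (fun a x => P a x.castSucc) (t ∘ Fin.castSucc) k := by
  by_cases hP : P k (Fin.last n)
  swap
  · rw [if_neg hP, zero_mul]
    refine Finset.sum_eq_zero fun p hp => absurd ?_ hP
    simp only [Finset.mem_filter, mem_increasingTuples] at hp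
    simpa [hp.2] using hp.1.2 (Fin.last k)
  rw [if_pos hP, increasingSum, Finset.mul_sum]
  have snoc_strictMono (q : Fin k → Fin n) (hq : StrictMono q) :
      StrictMono (Fin.snoc (Fin.castSucc ∘ q) (Fin.last n) : Fin (k + 1) → Fin (n + 1)) := by
    rw [← Fin.insertNth_last', Fin.strictMono_insertNth_iff]
    exact ⟨Fin.strictMono_castSucc.comp hq, fun i _ => Fin.castSucc_lt_last _,
      fun i hi => absurd hi (not_le.2 (Fin.castSucc_lt_last i))⟩
  refine Finset.sum_bij' (fun p hp a => (p a.castSucc).castPred ?_)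
    (fun q _ => Fin.snoc (Fin.castSucc ∘ q) (Fin.last n)) ?_ ?_ ?_ ?_ ?_
  · simp only [Finset.mem_filter, mem_increasingTuples] at hp
    exact (hp.2 ▸ hp.1.1 (Fin.castSucc_lt_last a)).ne
  · intro p hp
    simp only [Finset.mem_filter, mem_increasingTuples] at hp ⊢
    exact ⟨fun a b hab => by simpa [Fin.castPred_lt_castPred_iff] using hp.1.1 hab,
      fun a => by simpa using hp.1.2 a.castSucc⟩
  · intro q hq
    simp only [Finset.mem_filter, mem_increasingTuples] at hq ⊢
    refine ⟨⟨snoc_strictMono q hq.1, Fin.lastCases ?_ fun a => ?_⟩, Fin.snoc_last _ _⟩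
    · simpa using hP
    · simpa using hq.2 a
  · intro p hp
    simp only [Finset.mem_filter, mem_increasingTuples] at hp
    funext a
    refine Fin.lastCases ?_ (fun a => ?_) a
    · simpa using hp.2.symm
    · simp
  · intro q hq
    funext a
    simp
  · intro p hp
    simp only [Finset.mem_filter] at hp
    simp [Fin.prod_univ_castSucc, hp.2, mul_comm]

lemma increasingSum_succ :
    increasingSum P t (k + 1) =
      increasingSum (fun a x => P a x.castSucc) (t ∘ Fin.castSucc) (k + 1) +
        (if P k (Fin.last n) then t (Fin.last n) else 0) *
          increasingSum (fun a x => P a x.castSucc) (t ∘ Fin.castSucc) k := by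
  rw [increasingSum, ← Finset.sum_filter_not_add_sum_filter _ (fun p => p (Fin.last k) = Fin.last n),
    sum_increasingTuples_last_ne, sum_increasingTuples_last_eq]

end IncreasingSum

lemma mul_sum_range_eq_of_recurrence {R : Type*} [CommSemiring R] (l : ℕ) (A A' f g w : ℕ → R)
    (c : R) (hA : ∀ n, c * A' n = A n + w n * A (n + 1))
    (hf : ∀ n, f (n + 1) = g (n + 1) + w n * g n) (hf0 : f 0 = g 0) (hg : g (l + 1) = 0) :
    c * ∑ n ∈ Finset.range (l + 1), A' n * g n = ∑ n ∈ Finset.range (l + 2), A n * f n := by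
  have hA' (n : ℕ) : c * (A' n * g n) = A n * g n + A (n + 1) * (w n * g n) := by
    rw [← mul_assoc, hA]
    ring
  have hshift : ∑ n ∈ Finset.range (l + 1), A n * g n =
      ∑ n ∈ Finset.range (l + 1), A (n + 1) * g (n + 1) + A 0 * g 0 := by
    rw [Finset.sum_range_succ', Finset.sum_range_succ (fun n => A (n + 1) * g (n + 1)), hg,
      mul_zero, add_zero]
  rw [Finset.mul_sum, Finset.sum_congr rfl fun n _ => hA' n, Finset.sum_add_distrib, hshift,
    Finset.sum_range_succ' _ (l + 1)]
  simp only [hf, hf0, mul_add, Finset.sum_add_distrib]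
  ring

lemma List.reverse_ofFn_succ {α : Type*} {n : ℕ} (f : Fin (n + 1) → α) :
    (List.ofFn f).reverse = f (Fin.last n) :: (List.ofFn fun i => f i.castSucc).reverse := by
  rw [List.ofFn_succ', List.concat_eq_append, List.reverse_concat']

noncomputable def stepPoint (z : ℝ) (c : ℕ) (s : ℝ) : ℝ × ℝ × ℝ → ℝ × ℝ × ℝ
  | (a, b, d) =>
      if c = 1 then (a / (1 + a * s), b, b * s + d)
      else if c = 2 then (-(b - a * d) * s + a, b / (1 + d * s), d / (1 + d * s))
      else (a, b + s / z, d)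

noncomputable def prefactor (j c : ℕ) (s : ℝ) (p : ℝ × ℝ × ℝ) : ℝ :=
  if c = j then 1 + (if j = 1 then p.1 else p.2.2) * s else 1

lemma comp3_cons (μ1 μ2 z : ℝ) (c : ℕ) (s : ℝ) (rest : List (ℕ × ℝ)) (p : ℝ × ℝ × ℝ) :
    comp3 μ1 μ2 z ((c, s) :: rest) p =
      prefactor 1 c s p ^ μ1 * prefactor 2 c s p ^ μ2 * comp3 μ1 μ2 z rest (stepPoint z c s p) := by
  obtain ⟨a, b, d⟩ := p
  by_cases h1 : c = 1
  · simp [comp3, prefactor, stepPoint, h1]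
  by_cases h2 : c = 2
  · simp [comp3, prefactor, stepPoint, h2]
  · simp [comp3, prefactor, stepPoint, h1, h2]

lemma good3_cons (z : ℝ) (c : ℕ) (s : ℝ) (rest : List (ℕ × ℝ)) (p : ℝ × ℝ × ℝ) :
    good3 z ((c, s) :: rest) p ↔
      0 < prefactor 1 c s p ∧ 0 < prefactor 2 c s p ∧ good3 z rest (stepPoint z c s p) := by
  obtain ⟨a, b, d⟩ := p
  by_cases h1 : c = 1
  · simp [good3, prefactor, stepPoint, h1]
  by_cases h2 : c = 2
  · simp [good3, prefactor, stepPoint, h2]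
  · simp [good3, prefactor, stepPoint, h1, h2]

noncomputable def Acoef (z : ℝ) (j : ℕ) (p : ℝ × ℝ × ℝ) (n : ℕ) : ℝ :=
  if j = 1 then Acoef1 p.1 p.2.1 p.2.2 z n else Acoef2 p.1 p.2.1 p.2.2 z n

section Coefficients

variable (a b d z : ℝ) (q : ℕ)

lemma Acoef1_three_mul : Acoef1 a b d z (3 * q) = ((-z) ^ q)⁻¹ := by
  simp [Acoef1]

lemma Acoef1_three_mul_add_one : Acoef1 a b d z (3 * q + 1) = ((-z) ^ q)⁻¹ * a := by
  simp [Acoef1, Nat.add_mod, Nat.add_div]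

lemma Acoef1_three_mul_add_two : Acoef1 a b d z (3 * q + 2) = ((-z) ^ q)⁻¹ * (a * d - b) := by
  simp [Acoef1, Nat.add_mod, Nat.add_div]

lemma Acoef2_three_mul : Acoef2 a b d z (3 * q) = (z ^ q)⁻¹ := by
  simp [Acoef2]

lemma Acoef2_three_mul_add_one : Acoef2 a b d z (3 * q + 1) = (z ^ q)⁻¹ * d := by
  simp [Acoef2, Nat.add_mod, Nat.add_div]

lemma Acoef2_three_mul_add_two : Acoef2 a b d z (3 * q + 2) = (z ^ q)⁻¹ * b := by
  simp [Acoef2, Nat.add_mod, Nat.add_div]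

end Coefficients

lemma Acoef_stepPoint (z : ℝ) {j c : ℕ} (hj : j = 1 ∨ j = 2) (hc : c ≤ 2) (s : ℝ)
    (p : ℝ × ℝ × ℝ) (h1 : prefactor 1 c s p ≠ 0) (h2 : prefactor 2 c s p ≠ 0) (n : ℕ) :
    prefactor j c s p * Acoef z j (stepPoint z c s p) n =
      Acoef z j p n + (if c % 3 = (j * (n + 1)) % 3 then s else 0) * Acoef z j p (n + 1) := by
  obtain ⟨a, b, d⟩ := p
  obtain ⟨q, r, hr, rfl⟩ : ∃ q r, r < 3 ∧ n = 3 * q + r :=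
    ⟨n / 3, n % 3, Nat.mod_lt _ (by norm_num), (Nat.div_add_mod n 3).symm⟩
  have hcond : c % 3 = (j * (3 * q + r + 1)) % 3 ↔ c = j * (r + 1) % 3 := by
    rcases hj with rfl | rfl <;> omega
  have e : 3 * q + 2 + 1 = 3 * (q + 1) := by ring
  simp only [hcond]
  rcases hj with rfl | rfl <;> interval_cases r <;> interval_cases c <;>
    simp only [Acoef, stepPoint, prefactor, Acoef1_three_mul, Acoef1_three_mul_add_one,
      Acoef1_three_mul_add_two, Acoef2_three_mul, Acoef2_three_mul_add_one,
      Acoef2_three_mul_add_two, e, pow_succ, mul_inv, Nat.reduceEqDiff, if_true, if_false,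
      Nat.reduceMod, Nat.reduceAdd, Nat.reduceMul, add_zero] at h1 h2 ⊢ <;>
    field_simp <;> ring

lemma fcoef_eq_increasingSum (l : ℕ) (m : Fin l → ℕ) (j n : ℕ) (t : Fin l → ℝ) :
    fcoef l m j n t = increasingSum (fun a x => m x % 3 = (j * (a + 1)) % 3) t n :=
  rfl

noncomputable def Psl3At (l : ℕ) (m : Fin l → ℕ) (t : Fin l → ℝ) (p : ℝ × ℝ × ℝ) (z : ℝ)
    (j : ℕ) : ℝ :=
  Psl3 l m t p.1 p.2.1 p.2.2 z j

lemma Psl3At_zero (m : Fin 0 → ℕ) (t : Fin 0 → ℝ) (p : ℝ × ℝ × ℝ) (z : ℝ) (j : ℕ) :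
    Psl3At 0 m t p z j = 1 := by
  simp only [Psl3At, Psl3, zero_add, Finset.sum_range_one, fcoef_eq_increasingSum,
    increasingSum_zero]
  split_ifs <;> simp [Acoef1, Acoef2]

lemma Psl3At_succ {l : ℕ} (m : Fin (l + 1) → ℕ) (hm : m (Fin.last l) ≤ 2) (t : Fin (l + 1) → ℝ)
    (p : ℝ × ℝ × ℝ) (z : ℝ) {j : ℕ} (hj : j = 1 ∨ j = 2)
    (h1 : prefactor 1 (m (Fin.last l)) (t (Fin.last l)) p ≠ 0)
    (h2 : prefactor 2 (m (Fin.last l)) (t (Fin.last l)) p ≠ 0) :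
    Psl3At (l + 1) m t p z j =
      prefactor j (m (Fin.last l)) (t (Fin.last l)) p *
        Psl3At l (fun a => m a.castSucc) (fun a => t a.castSucc)
          (stepPoint z (m (Fin.last l)) (t (Fin.last l)) p) z j := by
  simp only [Psl3At, Psl3, fcoef_eq_increasingSum]
  refine (mul_sum_range_eq_of_recurrence l (Acoef z j p) _ _ _ _ _
    (Acoef_stepPoint z hj hm _ p h1 h2) (fun n => ?_) ?_ ?_).symm
  · exact increasingSum_succ _ t
  · rw [increasingSum_zero, increasingSum_zero]
  · exact increasingSum_eq_zero_of_lt _ _ (Nat.lt_succ_self l)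

theorem comp3_ofFn_reverse (μ1 μ2 z : ℝ) {l : ℕ} (m : Fin l → ℕ) (hm : ∀ a, m a ≤ 2)
    (t : Fin l → ℝ) (p : ℝ × ℝ × ℝ)
    (hgood : good3 z ((List.ofFn fun a => (m a, t a)).reverse) p)
    (hP1 : 0 < Psl3At l m t p z 1) (hP2 : 0 < Psl3At l m t p z 2) :
    comp3 μ1 μ2 z ((List.ofFn fun a => (m a, t a)).reverse) p =
      Psl3At l m t p z 1 ^ μ1 * Psl3At l m t p z 2 ^ μ2 := by
  induction l generalizing p with
  | zero => simp [comp3, Psl3At_zero]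
  | succ l ih =>
    simp only [List.reverse_ofFn_succ] at hgood ⊢
    obtain ⟨hπ1, hπ2, hgood⟩ := (good3_cons _ _ _ _ _).1 hgood
    have hstep (j : ℕ) (hj : j = 1 ∨ j = 2) := Psl3At_succ m (hm _) t p z hj hπ1.ne' hπ2.ne'
    rw [hstep 1 (.inl rfl)] at hP1 ⊢
    rw [hstep 2 (.inr rfl)] at hP2 ⊢
    have hQ1 := pos_of_mul_pos_right hP1 hπ1.le
    have hQ2 := pos_of_mul_pos_right hP2 hπ2.le
    rw [comp3_cons, ih _ (fun a => hm _) _ _ hgood hQ1 hQ2, Real.mul_rpow hπ1.le hQ1.le,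
      Real.mul_rpow hπ2.le hQ2.le]
    ring

theorem stmt12_general (μ1 μ2 z : ℝ) (l : ℕ)
    (m : Fin l → ℕ) (hm : ∀ a, m a ≤ 2)
    (t : Fin l → ℝ) (x11 x12 x22 : ℝ)
    (hgood : good3 z ((List.ofFn fun a : Fin l => (m a, t a)).reverse) (x11, x12, x22))
    (hP1 : 0 < Psl3 l m t x11 x12 x22 z 1)
    (hP2 : 0 < Psl3 l m t x11 x12 x22 z 2) :
    comp3 μ1 μ2 z ((List.ofFn fun a : Fin l => (m a, t a)).reverse) (x11, x12, x22) =
      Psl3 l m t x11 x12 x22 z 1 ^ μ1 * Psl3 l m t x11 x12 x22 z 2 ^ μ2 :=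
  comp3_ofFn_reverse μ1 μ2 z m hm t (x11, x12, x22) hgood hP1 hP2

/-- sl₃ kernel formula: for any word `m ∈ {0,1,2}^l`, on the domain where all prefactors
and `P¹`, `P²` are positive,
`T_{m_l}(t_l) ∘ ⋯ ∘ T_{m_1}(t_1) 1 = (P¹)^{μ₁}·(P²)^{μ₂}`. -/
theorem stmt12 (μ1 μ2 z : ℝ) (hz : z ≠ 0) (l : ℕ) (hl : 1 ≤ l)
    (m : Fin l → ℕ) (hm : ∀ a, m a ≤ 2)
    (t : Fin l → ℝ) (x11 x12 x22 : ℝ)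
    (hgood : good3 z ((List.ofFn fun a : Fin l => (m a, t a)).reverse) (x11, x12, x22))
    (hP1 : 0 < Psl3 l m t x11 x12 x22 z 1)
    (hP2 : 0 < Psl3 l m t x11 x12 x22 z 2) :
    comp3 μ1 μ2 z ((List.ofFn fun a : Fin l => (m a, t a)).reverse) (x11, x12, x22) =
      Psl3 l m t x11 x12 x22 z 1 ^ μ1 * Psl3 l m t x11 x12 x22 z 2 ^ μ2 :=
  stmt12_general μ1 μ2 z l m hm t x11 x12 x22 hgood hP1 hP2
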